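/- Let B ≥ 5, let j be an integer with 2 ≤ j ≤ B and (if B is even) j ≠ B/2 + 1, and let φ ∈ ℝ. Define z₁ := e^{−iφ}·F_B u_j + u_j and z₂ := e^{−iφ}·F_B v_j + v_j. Then ⟨z₁, z₂⟩ = 0, ‖z₁‖² = 4 + (8/√B)·cos φ·cos(2π(j−1)²/B), and ‖z₂‖² = 4 + (8/√B)·sin φ·sin(2π(j−1)²/B). -/

import Mathlib

open Matrix

noncomputable section

/-- The `B × B` Fourier transform matrix. -/
def fourierMat (B : ℕ) : Matrix (Fin B) (Fin B) ℂ :=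
  Matrix.of fun j k =>
    (1 / Real.sqrt B : ℝ) *
      Complex.exp (2 * Real.pi * Complex.I * (j : ℕ) * (k : ℕ) / B)

/-- The vector `u_j` (1-based position `j`): entries `1` in positions `j` and
`B + 2 − j`, zero elsewhere. -/
def uvec (B j : ℕ) : Fin B → ℂ := fun m =>
  if (m : ℕ) = j - 1 ∨ (m : ℕ) = B + 1 - j then 1 else 0

/-- The vector `v_j`: entry `1` in position `j`, `−1` in position `B + 2 − j`,
zero elsewhere. -/
def vvec (B j : ℕ) : Fin B → ℂ := fun m =>
  if (m : ℕ) = j - 1 then 1 else if (m : ℕ) = B + 1 - j then -1 else 0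

/-!
`F_B` is unitary and symmetric, and since `b = B + 1 - j` is congruent to `-a` modulo `B`, where
`a = j - 1`, its entries at these two indices form the block `[[p, p̄], [p̄, p]]` with
`p = e^{iθ}/√B`, `θ = 2π(j-1)²/B`. For `|c| = 1` unitarity gives
`⟪c F x + x, c F y + y⟫ = 2⟪x, y⟫ + conj (c ⟪y, F x⟫) + c ⟪x, F y⟫`, and on the block
`u = e_a + e_b`, `v = e_a - e_b` satisfy `⟪u, F u⟫ = 2(p + p̄)`, `⟪v, F v⟫ = 2(p - p̄)` and
`⟪u, F v⟫ = ⟪v, F u⟫ = 0`.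
-/

open Real

section

variable {n R : Type*} [Fintype n] [DecidableEq n] [CommRing R] [StarRing R]

theorem star_smul_mulVec_add_dotProduct {U : Matrix n n R} (hU : U ∈ unitaryGroup n R)
    {c : R} (hc : star c * c = 1) (x y : n → R) :
    star (c • U *ᵥ x + x) ⬝ᵥ (c • U *ᵥ y + y) =
      2 * (star x ⬝ᵥ y) + star (c * (star y ⬝ᵥ U *ᵥ x)) + c * (star x ⬝ᵥ U *ᵥ y) := by
  have hUU : star (U *ᵥ x) ⬝ᵥ U *ᵥ y = star x ⬝ᵥ y := by
    rw [star_mulVec, dotProduct_mulVec, vecMul_vecMul, ← star_eq_conjTranspose,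
      (mem_unitaryGroup_iff').1 hU, vecMul_one]
  have hUx : star (U *ᵥ x) ⬝ᵥ y = star (star y ⬝ᵥ U *ᵥ x) := star_dotProduct _ _
  simp only [star_add, star_smul, add_dotProduct, dotProduct_add, smul_dotProduct,
    dotProduct_smul, smul_eq_mul, hUU, hUx, star_mul']
  linear_combination (star x ⬝ᵥ y) * hc

theorem star_single_add_smul_single_dotProduct_mulVec (M : Matrix n n R) (a b : n) (s t : R) :
    star (Pi.single a 1 + s • Pi.single b 1) ⬝ᵥ M *ᵥ (Pi.single a 1 + t • Pi.single b 1) =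
      M a a + t * M a b + star s * (M b a + t * M b b) := by
  simp [mulVec_add, mulVec_smul, add_dotProduct, dotProduct_add]
  ring

end

theorem sum_norm_sq_eq_re_star_dotProduct {n : Type*} [Fintype n] (z : n → ℂ) :
    ∑ i, ‖z i‖ ^ 2 = (star z ⬝ᵥ z).re := by
  simp [dotProduct, Complex.re_sum, Complex.conj_mul', ← Complex.ofReal_pow]

theorem exp_neg_I_mul_ofReal (φ : ℝ) :
    Complex.exp (-(Complex.I * φ)) = Real.cos φ - Real.sin φ * Complex.I := by
  simp [Complex.ext_iff, Complex.exp_re, Complex.exp_im, -Complex.ofReal_cos, -Complex.ofReal_sin]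

theorem pow_mul_pow_mul_eq_one_of_add_eq {M : Type*} [Monoid M] {ζ : M} {B a b : ℕ}
    (hζ : ζ ^ B = 1) (hab : a + b = B) (c : ℕ) : ζ ^ (a * c) * ζ ^ (b * c) = 1 := by
  rw [← pow_add, ← add_mul, hab, pow_mul, hζ, one_pow]

section Fourier

variable {B : ℕ}

theorem fourierMat_apply (j k : Fin B) :
    fourierMat B j k = ((√B)⁻¹ : ℝ) * Complex.exp (2 * π * Complex.I / B) ^ ((j : ℕ) * k) := by
  rw [fourierMat, of_apply, one_div, ← Complex.exp_nat_mul]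
  congr 2
  push_cast
  ring

theorem star_fourierMat_apply (j k : Fin B) :
    star (fourierMat B j k) =
      ((√B)⁻¹ : ℝ) * (Complex.exp (2 * π * Complex.I / B) ^ ((j : ℕ) * k))⁻¹ := by
  have hζ := Complex.isPrimitiveRoot_exp B j.pos.ne'
  rw [fourierMat_apply, star_mul', Complex.star_def, Complex.conj_ofReal, map_pow,
    ← Complex.inv_eq_conj (hζ.norm'_eq_one j.pos.ne'), inv_pow]

theorem fourierMat_comm (j k : Fin B) : fourierMat B j k = fourierMat B k j := by
  rw [fourierMat_apply, fourierMat_apply, Nat.mul_comm]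

theorem fourierMat_mem_unitaryGroup (B : ℕ) : fourierMat B ∈ unitaryGroup (Fin B) ℂ := by
  rw [mem_unitaryGroup_iff']
  ext x y
  have hB : B ≠ 0 := x.pos.ne'
  have hζ := Complex.isPrimitiveRoot_exp B hB
  set ζ := Complex.exp (2 * π * Complex.I / B) with hζ_def
  set ω := (ζ ^ (x : ℕ))⁻¹ * ζ ^ (y : ℕ)
  have hterm (i : Fin B) :
      star (fourierMat B i x) * fourierMat B i y = (B : ℂ)⁻¹ * ω ^ (i : ℕ) := by
    have hr : ((√B)⁻¹ : ℝ) * ((√B)⁻¹ : ℝ) = (B : ℂ)⁻¹ := by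
      rw [← Complex.ofReal_mul, ← mul_inv, Real.mul_self_sqrt B.cast_nonneg, Complex.ofReal_inv,
        Complex.ofReal_natCast]
    rw [star_fourierMat_apply, fourierMat_apply, ← hζ_def, ← hr]
    simp only [ω, mul_pow, inv_pow, ← pow_mul']
    ring
  have hζx : ζ ^ (x : ℕ) ≠ 0 := pow_ne_zero _ (Complex.exp_ne_zero _)
  rw [star_eq_conjTranspose, mul_apply, one_apply]
  simp only [conjTranspose_apply, hterm, ← Finset.mul_sum]
  rw [Fin.sum_univ_eq_sum_range (ω ^ ·) B]
  by_cases hxy : x = y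
  · subst hxy
    simp [ω, inv_mul_cancel₀ hζx, hB]
  · have hω : ω ≠ 1 := fun h =>
      hxy (Fin.ext (hζ.pow_inj x.is_lt y.is_lt (inv_mul_eq_one₀ hζx |>.1 h)))
    have hωB : ω ^ B = 1 := by
      simp only [ω, mul_pow, inv_pow, pow_right_comm ζ _ B, hζ.pow_eq_one, one_pow, inv_one,
        one_mul]
    rw [geom_sum_eq hω, hωB, sub_self, zero_div, mul_zero, if_neg hxy]

theorem fourierMat_apply_of_add_eq {a b : Fin B} (hab : (a : ℕ) + b = B) :
    fourierMat B a b = star (fourierMat B a a) := by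
  have hζ := (Complex.isPrimitiveRoot_exp B a.pos.ne').pow_eq_one
  rw [star_fourierMat_apply, fourierMat_apply, Nat.mul_comm (a : ℕ) b,
    eq_inv_of_mul_eq_one_right (pow_mul_pow_mul_eq_one_of_add_eq hζ hab a)]

theorem fourierMat_apply_self_of_add_eq {a b : Fin B} (hab : (a : ℕ) + b = B) :
    fourierMat B b b = fourierMat B a a := by
  have hζ := (Complex.isPrimitiveRoot_exp B a.pos.ne').pow_eq_one
  rw [fourierMat_apply, fourierMat_apply,
    eq_inv_of_mul_eq_one_right (pow_mul_pow_mul_eq_one_of_add_eq hζ hab b),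
    eq_inv_of_mul_eq_one_left (pow_mul_pow_mul_eq_one_of_add_eq hζ hab a), Nat.mul_comm b a]

theorem fourierMat_apply_self (a : Fin B) :
    fourierMat B a a = ((√B)⁻¹ : ℝ) *
      (Real.cos (2 * π * (a : ℝ) ^ 2 / B) + Real.sin (2 * π * (a : ℝ) ^ 2 / B) * Complex.I) := by
  rw [fourierMat, of_apply, one_div, Complex.ofReal_cos, Complex.ofReal_sin, ← Complex.exp_mul_I]
  push_cast
  ring_nf

theorem star_smul_fourierMat_mulVec_add_dotProduct {a b : Fin B} (hab : a ≠ b)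
    (hsum : (a : ℕ) + b = B) {c : ℂ} (hc : star c * c = 1) (s t : ℂ) :
    star (c • fourierMat B *ᵥ (Pi.single a 1 + s • Pi.single b 1) +
        (Pi.single a 1 + s • Pi.single b 1)) ⬝ᵥ
      (c • fourierMat B *ᵥ (Pi.single a 1 + t • Pi.single b 1) +
        (Pi.single a 1 + t • Pi.single b 1)) =
      2 * (1 + star s * t) +
        star (c * (fourierMat B a a + s * star (fourierMat B a a) +
          star t * (star (fourierMat B a a) + s * fourierMat B a a))) +
        c * (fourierMat B a a + t * star (fourierMat B a a) +
          star s * (star (fourierMat B a a) + t * fourierMat B a a)) := by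
  have gram : star (Pi.single a 1 + s • Pi.single b 1) ⬝ᵥ (Pi.single a 1 + t • Pi.single b 1) =
      1 + star s * t := by
    simpa [hab, hab.symm] using star_single_add_smul_single_dotProduct_mulVec 1 a b s t
  rw [star_smul_mulVec_add_dotProduct (fourierMat_mem_unitaryGroup B) hc, gram,
    star_single_add_smul_single_dotProduct_mulVec, star_single_add_smul_single_dotProduct_mulVec,
    fourierMat_comm b a, fourierMat_apply_of_add_eq hsum, fourierMat_apply_self_of_add_eq hsum]

end Fourier

theorem sub_one_ne_add_one_sub {B j : ℕ} (hj : Even B → j ≠ B / 2 + 1) : j - 1 ≠ B + 1 - j := by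
  rcases Nat.even_or_odd B with hB | hB
  · have := hj hB
    rw [Nat.even_iff] at hB
    omega
  · rw [Nat.odd_iff] at hB
    omega

section Vectors

variable {B j : ℕ} {a b : Fin B}

theorem uvec_eq (ha : (a : ℕ) = j - 1) (hb : (b : ℕ) = B + 1 - j) (hab : a ≠ b) :
    uvec B j = Pi.single a 1 + (1 : ℂ) • Pi.single b 1 := by
  ext m
  simp only [uvec, ← ha, ← hb, Fin.val_inj]
  by_cases hma : m = a <;> by_cases hmb : m = b <;> simp_all

theorem vvec_eq (ha : (a : ℕ) = j - 1) (hb : (b : ℕ) = B + 1 - j) (hab : a ≠ b) :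
    vvec B j = Pi.single a 1 + (-1 : ℂ) • Pi.single b 1 := by
  ext m
  simp only [vvec, ← ha, ← hb, Fin.val_inj]
  by_cases hma : m = a <;> by_cases hmb : m = b <;> simp_all

end Vectors

theorem perturbed_eigenvector_norms_general (B j : ℕ)
    (hj2 : 2 ≤ j) (hjB : j ≤ B) (hjhalf : Even B → j ≠ B / 2 + 1)
    (φ : ℝ)
    (z₁ z₂ : Fin B → ℂ)
    (hz₁ : z₁ = Complex.exp (-(Complex.I * φ)) •
      (fourierMat B).mulVec (uvec B j) + uvec B j)
    (hz₂ : z₂ = Complex.exp (-(Complex.I * φ)) •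
      (fourierMat B).mulVec (vvec B j) + vvec B j) :
    (∑ i, starRingEnd ℂ (z₁ i) * z₂ i) = 0 ∧
    (∑ i, ‖z₁ i‖ ^ 2) =
      4 + 8 / Real.sqrt B * Real.cos φ *
        Real.cos (2 * Real.pi * ((j : ℝ) - 1) ^ 2 / B) ∧
    (∑ i, ‖z₂ i‖ ^ 2) =
      4 + 8 / Real.sqrt B * Real.sin φ *
        Real.sin (2 * Real.pi * ((j : ℝ) - 1) ^ 2 / B) := by
  set a : Fin B := ⟨j - 1, by omega⟩
  set b : Fin B := ⟨B + 1 - j, by omega⟩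
  have hab : a ≠ b := fun h => sub_one_ne_add_one_sub hjhalf (congrArg Fin.val h)
  have hsum : (a : ℕ) + b = B := by simp only [a, b]; omega
  have hp := fourierMat_apply_self a
  rw [show ((a : ℕ) : ℝ) = j - 1 by simp [a, Nat.cast_sub (by omega : 1 ≤ j)]] at hp
  subst hz₁ hz₂
  set c := Complex.exp (-(Complex.I * φ)) with hc_def
  have hc : star c * c = 1 := by
    simp [c, Complex.conj_mul', Complex.norm_exp]
  have key := star_smul_fourierMat_mulVec_add_dotProduct hab hsum hc
  rw [uvec_eq rfl rfl hab, vvec_eq rfl rfl hab, sum_norm_sq_eq_re_star_dotProduct,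
    sum_norm_sq_eq_re_star_dotProduct]
  refine ⟨(key 1 (-1)).trans ?_, ?_, ?_⟩
  · simp only [star_one, star_neg, star_mul', star_add, star_star]
    ring
  all_goals
    rw [key, hp, hc_def, exp_neg_I_mul_ofReal]
    simp [Complex.mul_re, Complex.mul_im, -Complex.ofReal_cos, -Complex.ofReal_sin,
      -Complex.ofReal_inv]
    ring

/-- With `z₁ = e^{−iφ} F_B u_j + u_j` and
`z₂ = e^{−iφ} F_B v_j + v_j`, one has `⟨z₁, z₂⟩ = 0`,
`‖z₁‖² = 4 + (8/√B) cos φ cos(2π(j−1)²/B)` and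
`‖z₂‖² = 4 + (8/√B) sin φ sin(2π(j−1)²/B)`. -/
theorem perturbed_eigenvector_norms (B j : ℕ) (hB : 5 ≤ B)
    (hj2 : 2 ≤ j) (hjB : j ≤ B) (hjhalf : Even B → j ≠ B / 2 + 1)
    (φ : ℝ)
    (z₁ z₂ : Fin B → ℂ)
    (hz₁ : z₁ = Complex.exp (-(Complex.I * φ)) •
      (fourierMat B).mulVec (uvec B j) + uvec B j)
    (hz₂ : z₂ = Complex.exp (-(Complex.I * φ)) •
      (fourierMat B).mulVec (vvec B j) + vvec B j) :
    (∑ i, starRingEnd ℂ (z₁ i) * z₂ i) = 0 ∧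
    (∑ i, ‖z₁ i‖ ^ 2) =
      4 + 8 / Real.sqrt B * Real.cos φ *
        Real.cos (2 * Real.pi * ((j : ℝ) - 1) ^ 2 / B) ∧
    (∑ i, ‖z₂ i‖ ^ 2) =
      4 + 8 / Real.sqrt B * Real.sin φ *
        Real.sin (2 * Real.pi * ((j : ℝ) - 1) ^ 2 / B) :=
  perturbed_eigenvector_norms_general B j hj2 hjB hjhalf φ z₁ z₂ hz₁ hz₂
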